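/- arXiv:2511.02511 — 6 statements merged into one kernel-verified Lean document; each statement's English description precedes it below -/
import Mathlib

section
/- Let N ≥ 3, σ > -2, and define p_S(σ) = (N+2σ+2)/(N-2). If N > 10 + 4σ, then the Joseph–Lundgren exponent p_{JL}(σ) = [(N-2)^2 - 2(N+σ)(σ+2) + 2(σ+2)√((N+σ)^2-(N-2)^2)] / [(N-2)(N-10-4σ)] satisfies p_{JL}(σ) > p_S(σ). -/
/-- For `N > 10 + 4σ`, the Joseph–Lundgren exponent exceeds the Sobolev exponent. -/
theorem pJL_gt_pS (N : ℕ) (σ : ℝ) (hN : 3 ≤ N) (hσ : -2 < σ)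
    (hdim : (N : ℝ) > 10 + 4 * σ) :
    (((N : ℝ) - 2) ^ 2 - 2 * ((N : ℝ) + σ) * (σ + 2)
        + 2 * (σ + 2) * Real.sqrt (((N : ℝ) + σ) ^ 2 - ((N : ℝ) - 2) ^ 2))
      / (((N : ℝ) - 2) * ((N : ℝ) - 10 - 4 * σ))
    > ((N : ℝ) + 2 * σ + 2) / ((N : ℝ) - 2) := by
  set n := (N : ℝ) with hn
  have h2 : (2:ℝ) < n := by nlinarith
  have hd1 : (0:ℝ) < n - 2 := by linarith
  have hd2 : (0:ℝ) < n - 10 - 4*σ := by linarith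
  rw [gt_iff_lt, div_lt_div_iff₀ hd1 (by positivity)]
  have hs := Real.sqrt_nonneg ((n + σ) ^ 2 - (n - 2) ^ 2)
  nlinarith [mul_nonneg (mul_nonneg (by linarith : (0:ℝ) ≤ σ + 2) hs) hd1.le,
    mul_pos (mul_pos (by linarith : (0:ℝ) < σ + 2) (by linarith : (0:ℝ) < σ + 2)) hd1]
end

section
/- Let σ ∈ (0,2) and N > 2(10-σ)/(2-σ). Then the generalized Lepin exponent p_L(σ) = (2-σ)(N+σ-4)/(N(2-σ) - 2(10-σ)) satisfies p_L(σ) > p_{JL}(σ), where p_{JL}(σ) = 1 + 2(σ+2)/(N-4-σ-√((2N+σ-2)(σ+2))). -/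
/-!
Both exponents exceed `1`: with `D₁ = N(2-σ) - 2(10-σ)`, `s = √((2N+σ-2)(σ+2))` and
`D₂ = N - 4 - σ - s` one has `p_L - 1 = (6-σ)(σ+2)/D₁` and `p_JL - 1 = 2(σ+2)/D₂`, so the claim
is `2 D₁ < (6-σ) D₂`, i.e. `(6-σ) s < R := N(σ+2) + σ² - 6σ + 16`. This holds because
`R² - (6-σ)² s²` is the perfect square `(N(σ+2) + 6σ - 20)²`. Positivity of `D₂` comes from
`(N-4-σ)² - s² = (N-2)(N-10-4σ)`, and `N > 10 + 4σ` follows from `D₁ > 0`.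
-/

noncomputable def lepinExponent (N σ : ℝ) : ℝ :=
  (2 - σ) * (N + σ - 4) / (N * (2 - σ) - 2 * (10 - σ))

noncomputable def josephLundgrenExponent (N σ : ℝ) : ℝ :=
  1 + 2 * (σ + 2) / (N - 4 - σ - √((2 * N + σ - 2) * (σ + 2)))

section

variable {N σ : ℝ}

lemma lepinExponent_sub_one (hD : N * (2 - σ) - 2 * (10 - σ) ≠ 0) :
    lepinExponent N σ - 1 = (6 - σ) * (σ + 2) / (N * (2 - σ) - 2 * (10 - σ)) := by
  rw [lepinExponent, div_sub_one hD]
  ring_nf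

lemma josephLundgrenExponent_sub_one :
    josephLundgrenExponent N σ - 1 = 2 * (σ + 2) / (N - 4 - σ - √((2 * N + σ - 2) * (σ + 2))) :=
  add_sub_cancel_left _ _

lemma lepin_denominator_pos (hσ : σ < 2) (hN : 2 * (10 - σ) / (2 - σ) < N) :
    0 < N * (2 - σ) - 2 * (10 - σ) := by
  rw [div_lt_iff₀ (by linarith)] at hN
  linarith

lemma lt_of_lepin_denominator_pos (hσ : σ < 2) (hD : 0 < N * (2 - σ) - 2 * (10 - σ)) :
    10 + 4 * σ < N := by
  have : (10 + 4 * σ) * (2 - σ) < N * (2 - σ) := by nlinarith [sq_nonneg σ]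
  exact lt_of_mul_lt_mul_right this (by linarith)

lemma josephLundgren_denominator_pos (hσ : -2 ≤ σ) (hN : 10 + 4 * σ < N) :
    0 < N - 4 - σ - √((2 * N + σ - 2) * (σ + 2)) := by
  have hfactor : (N - 4 - σ) ^ 2 - (2 * N + σ - 2) * (σ + 2) = (N - 2) * (N - 10 - 4 * σ) := by
    ring
  have hsq : (2 * N + σ - 2) * (σ + 2) < (N - 4 - σ) ^ 2 := by
    nlinarith [mul_pos (by linarith : (0 : ℝ) < N - 2) (by linarith : (0 : ℝ) < N - 10 - 4 * σ)]
  linarith [(Real.sqrt_lt' (by linarith)).2 hsq]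

lemma six_sub_mul_sqrt_lt (hσ : 0 ≤ σ) (hN : 10 + 4 * σ < N) :
    (6 - σ) * √((2 * N + σ - 2) * (σ + 2)) < N * (σ + 2) + σ ^ 2 - 6 * σ + 16 := by
  set s := √((2 * N + σ - 2) * (σ + 2))
  have hs : s ^ 2 = (2 * N + σ - 2) * (σ + 2) := Real.sq_sqrt (by nlinarith)
  have hsquare : (N * (σ + 2) + σ ^ 2 - 6 * σ + 16) ^ 2
      = ((6 - σ) * s) ^ 2 + (N * (σ + 2) + 6 * σ - 20) ^ 2 := by
    rw [mul_pow, hs]; ring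
  have hT : 0 < N * (σ + 2) + 6 * σ - 20 := by nlinarith
  have hR : 0 ≤ N * (σ + 2) + σ ^ 2 - 6 * σ + 16 := by nlinarith [sq_nonneg (σ - 3)]
  refine (le_abs_self _).trans_lt (abs_lt_of_sq_lt_sq ?_ hR)
  rw [hsquare]
  exact lt_add_of_pos_right _ (pow_pos hT 2)

end

/-- For `σ ∈ (0,2)` and `N > 2(10-σ)/(2-σ)`, the Lepin exponent exceeds the
Joseph–Lundgren exponent. -/
theorem pL_gt_pJL (N σ : ℝ) (hσ0 : 0 < σ) (hσ2 : σ < 2)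
    (hdim : N > 2 * (10 - σ) / (2 - σ)) :
    (2 - σ) * (N + σ - 4) / (N * (2 - σ) - 2 * (10 - σ))
      > 1 + 2 * (σ + 2) / (N - 4 - σ - Real.sqrt ((2 * N + σ - 2) * (σ + 2))) := by
  show josephLundgrenExponent N σ < lepinExponent N σ
  have hD₁ := lepin_denominator_pos hσ2 hdim
  have hN := lt_of_lepin_denominator_pos hσ2 hD₁
  have hD₂ := josephLundgren_denominator_pos (by linarith) hN
  have hkey := six_sub_mul_sqrt_lt hσ0.le hN
  rw [← sub_lt_sub_iff_right 1, lepinExponent_sub_one hD₁.ne', josephLundgrenExponent_sub_one,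
    div_lt_div_iff₀ hD₂ hD₁, mul_right_comm, mul_right_comm (6 - σ)]
  exact mul_lt_mul_of_pos_right (by linarith) (by linarith)
end

section
/- Let A = N - 2 - 2(σ+2)/(p-1) and B = (σ+2)(N - 2 - (σ+2)/(p-1)) with p > 1, σ > -2, N ≥ 3. Then A² - 4B > 0 if and only if p > p_{JL}(σ), in the regime N > 10 + 4σ and p > p_S(σ), where p_{JL}(σ) = 1 + 2(σ+2)/(N-4-σ-√((2N+σ-2)(σ+2))). In particular, for p > p_{JL}(σ), A² > 4B. -/
/-- In the regime `N > 10 + 4σ`, `p > p_S(σ)`, the discriminant condition `A² - 4B > 0`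
holds if and only if `p > p_{JL}(σ)`. -/
theorem discriminant_iff_pJL (N : ℕ) (σ p : ℝ) (hN : 3 ≤ N) (hσ : -2 < σ)
    (hdim : (N : ℝ) > 10 + 4 * σ)
    (hp : p > ((N : ℝ) + 2 * σ + 2) / ((N : ℝ) - 2)) :
    (((N : ℝ) - 2 - 2 * (σ + 2) / (p - 1)) ^ 2
        - 4 * ((σ + 2) * ((N : ℝ) - 2 - (σ + 2) / (p - 1))) > 0
      ↔ p > 1 + 2 * (σ + 2) / ((N : ℝ) - 4 - σ - Real.sqrt ((2 * N + σ - 2) * (σ + 2))))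
    ∧ (p > 1 + 2 * (σ + 2) / ((N : ℝ) - 4 - σ - Real.sqrt ((2 * N + σ - 2) * (σ + 2)))
      → ((N : ℝ) - 2 - 2 * (σ + 2) / (p - 1)) ^ 2
          > 4 * ((σ + 2) * ((N : ℝ) - 2 - (σ + 2) / (p - 1)))) := by
  have hN3 : (3:ℝ) ≤ (N:ℝ) := by exact_mod_cast hN
  have h2 : (0:ℝ) < σ + 2 := by linarith
  have hN2 : (0:ℝ) < (N : ℝ) - 2 := by linarith
  have hpS1 : (1:ℝ) < ((N : ℝ) + 2 * σ + 2) / ((N : ℝ) - 2) := by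
    rw [lt_div_iff₀ hN2]; linarith
  have hp1 : (0:ℝ) < p - 1 := by linarith [lt_trans hpS1 hp]
  set s := Real.sqrt ((2 * N + σ - 2) * (σ + 2)) with hs
  have harg : (0:ℝ) ≤ (2 * N + σ - 2) * (σ + 2) := by nlinarith
  have hs2 : s ^ 2 = (2 * N + σ - 2) * (σ + 2) := Real.sq_sqrt harg
  have hsnn : 0 ≤ s := Real.sqrt_nonneg _
  have hsgt : σ + 2 < s := by
    rw [hs]
    rw [Real.lt_sqrt (le_of_lt h2)]
    nlinarith
  have hslt : s < (N : ℝ) - 4 - σ := by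
    rw [hs]
    rw [Real.sqrt_lt' (by linarith : (0:ℝ) < (N : ℝ) - 4 - σ)]
    nlinarith
  have hden : (0:ℝ) < (N : ℝ) - 4 - σ - s := by linarith
  clear_value s
  have hne : p - 1 ≠ 0 := ne_of_gt hp1
  have hD : ((N : ℝ) - 2 - 2 * (σ + 2) / (p - 1)) ^ 2
        - 4 * ((σ + 2) * ((N : ℝ) - 2 - (σ + 2) / (p - 1)))
      = (2 * ((σ + 2) / (p - 1)) - ((N : ℝ) - 4 - σ) - s)
        * (2 * ((σ + 2) / (p - 1)) - ((N : ℝ) - 4 - σ) + s) := by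
    linear_combination hs2
  have ht : (σ + 2) / (p - 1) < ((N : ℝ) - 2) / 2 := by
    rw [div_lt_div_iff₀ hp1 two_pos]
    have h := (div_lt_iff₀ hN2).mp hp
    nlinarith
  have hfac1 : 2 * ((σ + 2) / (p - 1)) - ((N : ℝ) - 4 - σ) - s < 0 := by
    have : (σ + 2) / (p - 1) < (((N : ℝ) - 4 - σ) + s) / 2 := by
      have : ((N : ℝ) - 2) / 2 < (((N : ℝ) - 4 - σ) + s) / 2 := by linarith
      linarith
    linarith
  have main : ((N : ℝ) - 2 - 2 * (σ + 2) / (p - 1)) ^ 2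
        - 4 * ((σ + 2) * ((N : ℝ) - 2 - (σ + 2) / (p - 1))) > 0
      ↔ p > 1 + 2 * (σ + 2) / ((N : ℝ) - 4 - σ - s) := by
    constructor
    · intro h
      rw [hD] at h
      have h2' : 2 * ((σ + 2) / (p - 1)) - ((N : ℝ) - 4 - σ) + s < 0 := by
        by_contra hc
        push_neg at hc
        have hle := mul_nonpos_iff.mpr (Or.inr ⟨le_of_lt hfac1, hc⟩)
        linarith only [h, hle]
      have hx : (σ + 2) / (p - 1) < (((N : ℝ) - 4 - σ) - s) / 2 := by
        linarith only [h2']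
      have hmul := (div_lt_div_iff₀ hp1 two_pos).mp hx
      have hy : 2 * (σ + 2) / ((N : ℝ) - 4 - σ - s) < p - 1 := by
        rw [div_lt_iff₀ hden]
        nlinarith [hmul]
      linarith only [hy]
    · intro h
      have hstep : 2 * (σ + 2) / ((N : ℝ) - 4 - σ - s) < p - 1 := by
        linarith only [h]
      have hmul := (div_lt_iff₀ hden).mp hstep
      have hx : (σ + 2) / (p - 1) < (((N : ℝ) - 4 - σ) - s) / 2 := by
        rw [div_lt_div_iff₀ hp1 two_pos]
        nlinarith [hmul]
      have h2' : 2 * ((σ + 2) / (p - 1)) - ((N : ℝ) - 4 - σ) + s < 0 := by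
        linarith only [hx]
      rw [hD]
      exact mul_pos_of_neg_of_neg hfac1 h2'
  exact ⟨main, fun h => by have := main.mpr h; linarith only [this]⟩
end

section
/- Let σ ≥ 2, N > 10 + 4σ, p > p_S(σ) = (N+2σ+2)/(N-2), and set A = N-2-2(σ+2)/(p-1), B = (σ+2)(N-2-(σ+2)/(p-1)). If additionally A > 8 and A² > 4B, then A - √(A²-4B) > 8 if and only if (σ-2)(N-2)+16 > (σ+2)(σ-6)/(p-1); in particular, since σ ≥ 2 makes the left side positive and p > p_S(σ) > p_L(σ) := (σ-2)(N+σ-4)/(σ(N-2)-2(N-10)), the inequality A - √(A²-4B) > 8 holds. -/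
lemma sqrt_sub_gt_iff_aux (A B c : ℝ) (hA : A > 8)
    (hid : (A - 8) ^ 2 - (A ^ 2 - 4 * B) = 4 * c) :
    A - Real.sqrt (A ^ 2 - 4 * B) > 8 ↔ 0 < c := by
  rw [gt_iff_lt, lt_sub_comm, Real.sqrt_lt' (by linarith : (0:ℝ) < A - 8)]
  constructor <;> intro h <;> linarith

/-- For `σ ≥ 2`, `N > 10 + 4σ`, `p > p_S(σ)`: with `A > 8` and `A² > 4B`, the inequality
`A - √(A²-4B) > 8` is equivalent to `(σ-2)(N-2)+16 > (σ+2)(σ-6)/(p-1)`, and it holds. -/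
theorem main_inequality_sigma_ge_two (N : ℕ) (σ p : ℝ) (hσ : 2 ≤ σ)
    (hdim : (N : ℝ) > 10 + 4 * σ)
    (hp : p > ((N : ℝ) + 2 * σ + 2) / ((N : ℝ) - 2))
    (hA : (N : ℝ) - 2 - 2 * (σ + 2) / (p - 1) > 8)
    (hdisc : ((N : ℝ) - 2 - 2 * (σ + 2) / (p - 1)) ^ 2
        > 4 * ((σ + 2) * ((N : ℝ) - 2 - (σ + 2) / (p - 1)))) :
    (((N : ℝ) - 2 - 2 * (σ + 2) / (p - 1))
        - Real.sqrt (((N : ℝ) - 2 - 2 * (σ + 2) / (p - 1)) ^ 2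
            - 4 * ((σ + 2) * ((N : ℝ) - 2 - (σ + 2) / (p - 1)))) > 8
      ↔ (σ - 2) * ((N : ℝ) - 2) + 16 > (σ + 2) * (σ - 6) / (p - 1))
    ∧ ((N : ℝ) - 2 - 2 * (σ + 2) / (p - 1))
        - Real.sqrt (((N : ℝ) - 2 - 2 * (σ + 2) / (p - 1)) ^ 2
            - 4 * ((σ + 2) * ((N : ℝ) - 2 - (σ + 2) / (p - 1)))) > 8 := by
  have hN : (N : ℝ) - 2 > 0 := by linarith
  have hp1 : p - 1 > 0 := by
    have : ((N : ℝ) + 2 * σ + 2) / ((N : ℝ) - 2) > 1 := by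
      rw [gt_iff_lt, lt_div_iff₀ hN]; linarith
    linarith
  have hident : (((N : ℝ) - 2 - 2 * (σ + 2) / (p - 1)) - 8) ^ 2
      - (((N : ℝ) - 2 - 2 * (σ + 2) / (p - 1)) ^ 2
        - 4 * ((σ + 2) * ((N : ℝ) - 2 - (σ + 2) / (p - 1))))
      = 4 * (((σ - 2) * ((N : ℝ) - 2) + 16) - (σ + 2) * (σ - 6) / (p - 1)) := by
    field_simp
    ring
  have hiff0 := sqrt_sub_gt_iff_aux _ _ _ hA hident
  have hiff : ((N : ℝ) - 2 - 2 * (σ + 2) / (p - 1))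
      - Real.sqrt (((N : ℝ) - 2 - 2 * (σ + 2) / (p - 1)) ^ 2
        - 4 * ((σ + 2) * ((N : ℝ) - 2 - (σ + 2) / (p - 1)))) > 8
      ↔ (σ - 2) * ((N : ℝ) - 2) + 16 > (σ + 2) * (σ - 6) / (p - 1) := by
    rw [hiff0]; constructor <;> intro h <;> linarith
  have hpN : (p - 1) * ((N : ℝ) - 2) > 2 * σ + 4 := by
    have := (div_lt_iff₀ hN).mp hp
    nlinarith
  have hrhs : (σ - 2) * ((N : ℝ) - 2) + 16 > (σ + 2) * (σ - 6) / (p - 1) := by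
    rw [gt_iff_lt, div_lt_iff₀ hp1]
    have hpos : (σ - 2) * ((N : ℝ) - 2) + 16 > 0 := by nlinarith
    have h3 : ((σ - 2) * ((N : ℝ) - 2) + 16) * ((p - 1) * ((N : ℝ) - 2))
        > ((σ - 2) * ((N : ℝ) - 2) + 16) * (2 * σ + 4) :=
      mul_lt_mul_of_pos_left hpN hpos
    have h4 : ((σ - 2) * ((N : ℝ) - 2) + 16) * (2 * σ + 4)
        > (σ + 2) * (σ - 6) * ((N : ℝ) - 2) := by
      nlinarith [mul_pos (by linarith : (0:ℝ) < σ + 2)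
        (by nlinarith : (0:ℝ) < (σ + 2) * ((N : ℝ) - 2) + 32)]
    have h5 : (σ + 2) * (σ - 6) * ((N : ℝ) - 2)
        < ((σ - 2) * ((N : ℝ) - 2) + 16) * (p - 1) * ((N : ℝ) - 2) := by
      nlinarith
    exact lt_of_mul_lt_mul_right (by nlinarith) (le_of_lt hN)
  exact ⟨hiff, hiff.mpr hrhs⟩
end

section
/- Let j ≥ 1 be a natural number, σ ≥ 2j, N > 10 + 4σ, and p > p_{JL}(σ). Set A = N-2-2(σ+2)/(p-1) and B = (σ+2)(N-2-(σ+2)/(p-1)). Then A > 4(j+1) and A - √(A²-4B) > 4(j+1). In particular, the inequality (N-2)(σ-2j) + 4(j+1)² ≥ (σ+2)(σ-4j-2)/(p-1) holds. -/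
/-- Multiplicity inequality: for `σ ≥ 2j`, `N > 10 + 4σ`, `p > p_{JL}(σ)`, one has
`A > 4(j+1)` and `A - √(A²-4B) > 4(j+1)`; in particular
`(N-2)(σ-2j) + 4(j+1)² ≥ (σ+2)(σ-4j-2)/(p-1)`. -/
theorem multiplicity_inequality (N j : ℕ) (σ p : ℝ) (hj : 1 ≤ j)
    (hσ : 2 * (j : ℝ) ≤ σ) (hdim : (N : ℝ) > 10 + 4 * σ)
    (hp : p > 1 + 2 * (σ + 2) / ((N : ℝ) - 4 - σ - Real.sqrt ((2 * N + σ - 2) * (σ + 2)))) :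
    (N : ℝ) - 2 - 2 * (σ + 2) / (p - 1) > 4 * ((j : ℝ) + 1)
    ∧ ((N : ℝ) - 2 - 2 * (σ + 2) / (p - 1))
        - Real.sqrt (((N : ℝ) - 2 - 2 * (σ + 2) / (p - 1)) ^ 2
            - 4 * ((σ + 2) * ((N : ℝ) - 2 - (σ + 2) / (p - 1)))) > 4 * ((j : ℝ) + 1)
    ∧ ((N : ℝ) - 2) * (σ - 2 * j) + 4 * ((j : ℝ) + 1) ^ 2
        ≥ (σ + 2) * (σ - 4 * j - 2) / (p - 1) := by
  have hj1 : (1:ℝ) ≤ (j:ℝ) := by exact_mod_cast hj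
  have hσ2 : (0:ℝ) < σ + 2 := by linarith
  set r := Real.sqrt ((2 * N + σ - 2) * (σ + 2)) with hr
  have hr0 : 0 ≤ r := Real.sqrt_nonneg _
  have hr3 : 3 * (σ + 2) ≤ r := by
    rw [hr, show (3*(σ+2)) = Real.sqrt ((3*(σ+2))^2) from (Real.sqrt_sq (by linarith)).symm]
    apply Real.sqrt_le_sqrt
    nlinarith
  have hrlt : r < (N:ℝ) - 4 - σ := by
    rw [hr]
    apply (Real.sqrt_lt' (by linarith)).mpr
    nlinarith
  have hden : 0 < (N:ℝ) - 4 - σ - r := by linarith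
  have hp1 : 0 < p - 1 := by
    have : 0 < 2*(σ+2)/((N:ℝ)-4-σ-r) := div_pos (by linarith) hden
    linarith
  set q := (σ+2)/(p-1) with hqdef
  have hq0 : 0 < q := div_pos hσ2 hp1
  have hqlt : 2*q < (N:ℝ) - 4 - σ - r := by
    have h1 : 2*(σ+2) < (p-1)*((N:ℝ)-4-σ-r) := (div_lt_iff₀ hden).mp (by linarith)
    have h2 : q < ((N:ℝ)-4-σ-r)/2 := by
      rw [hqdef, div_lt_div_iff₀ hp1 (by norm_num : (0:ℝ) < 2)]
      linarith
    linarith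
  have hq2 : 2*q < (N:ℝ) - 6 - 4*(j:ℝ) := by linarith
  have hK : q*(σ-4*(j:ℝ)-2) < ((N:ℝ)-2)*(σ-2*(j:ℝ)) + 4*((j:ℝ)+1)^2 := by
    rcases le_or_gt (σ - 4*(j:ℝ) - 2) 0 with h | h
    · have h1 : q*(σ-4*(j:ℝ)-2) ≤ 0 := mul_nonpos_of_nonneg_of_nonpos hq0.le h
      nlinarith [mul_nonneg (show (0:ℝ) ≤ (N:ℝ)-2 by linarith)
        (show (0:ℝ) ≤ σ-2*(j:ℝ) by linarith)]
    · have h1 : q*(σ-4*(j:ℝ)-2) < (((N:ℝ)-6-4*(j:ℝ))/2)*(σ-4*(j:ℝ)-2) := by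
        apply mul_lt_mul_of_pos_right _ h
        linarith
      nlinarith [h1, mul_nonneg (show (0:ℝ) ≤ ((N:ℝ)+2+4*(j:ℝ))/2 by linarith)
        (show (0:ℝ) ≤ σ-4*(j:ℝ)-2 by linarith),
        mul_nonneg (show (0:ℝ) ≤ (N:ℝ)-2 by linarith)
        (show (0:ℝ) ≤ (2*(j:ℝ)+2) by linarith)]
  have he : 2 * (σ + 2) / (p - 1) = 2*q := by rw [hqdef]; ring
  have he3 : (σ + 2) * (σ - 4 * (j:ℝ) - 2) / (p - 1) = q * (σ - 4*(j:ℝ) - 2) := by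
    rw [hqdef]; ring
  rw [he, he3]
  have hA : (N:ℝ) - 2 - 2*q > 4*((j:ℝ)+1) := by linarith
  refine ⟨hA, ?_, by linarith⟩
  have hkey : ((N:ℝ)-2-2*q)^2 - 4*((σ+2)*((N:ℝ)-2-q))
      < ((N:ℝ)-2-2*q - 4*((j:ℝ)+1))^2 := by nlinarith [hK]
  have hs : Real.sqrt (((N:ℝ)-2-2*q)^2 - 4*((σ+2)*((N:ℝ)-2-q)))
      < (N:ℝ)-2-2*q - 4*((j:ℝ)+1) := (Real.sqrt_lt' (by linarith)).mpr hkey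
  linarith
end

section
/- Let N ≥ 3, σ > -2, p > p_S(σ) = (N+2σ+2)/(N-2). Consider the planar system Y' = -(N-2)Y - Z - Y², Z' = Z(σ+2+(p-1)Y) on the region {-(N-2) ≤ Y ≤ 0, Z ≥ 0}. Then along the curve Z = -(N+σ)Y - ((N+σ)/(N-2))Y², the scalar product of the vector field with the normal vector (((N+σ)/(N-2))(2Y+N-2), 1) equals F(Y) = ((N+σ)(p_S(σ)-p)/(N-2)) Y²(Y+N-2), and F(Y) ≤ 0 for all Y ∈ [-(N-2), 0]. -/
/-- The flow of the reduced planar system across the curve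
`Z = -(N+σ)Y - ((N+σ)/(N-2))Y²` is given by
`F(Y) = ((N+σ)(p_S(σ)-p)/(N-2)) Y²(Y+N-2) ≤ 0` for `Y ∈ [-(N-2),0]`. -/
theorem invariant_region_flow (N : ℕ) (σ p : ℝ) (hN : 3 ≤ N) (hσ : -2 < σ)
    (hp : p > ((N : ℝ) + 2 * σ + 2) / ((N : ℝ) - 2)) :
    ∀ Y : ℝ, -((N : ℝ) - 2) ≤ Y → Y ≤ 0 →
      ((((N : ℝ) + σ) / ((N : ℝ) - 2)) * (2 * Y + ((N : ℝ) - 2)))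
          * (-((N : ℝ) - 2) * Y - (-((N : ℝ) + σ) * Y - (((N : ℝ) + σ) / ((N : ℝ) - 2)) * Y ^ 2)
              - Y ^ 2)
        + (-((N : ℝ) + σ) * Y - (((N : ℝ) + σ) / ((N : ℝ) - 2)) * Y ^ 2)
          * (σ + 2 + (p - 1) * Y)
      = (((N : ℝ) + σ) * (((N : ℝ) + 2 * σ + 2) / ((N : ℝ) - 2) - p) / ((N : ℝ) - 2))
          * Y ^ 2 * (Y + ((N : ℝ) - 2))
      ∧ (((N : ℝ) + σ) * (((N : ℝ) + 2 * σ + 2) / ((N : ℝ) - 2) - p) / ((N : ℝ) - 2))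
          * Y ^ 2 * (Y + ((N : ℝ) - 2)) ≤ 0 := by
  have hN3 : (3 : ℝ) ≤ (N : ℝ) := by exact_mod_cast hN
  have hN2 : (0 : ℝ) < (N : ℝ) - 2 := by linarith
  have hNe : ((N : ℝ) - 2) ≠ 0 := ne_of_gt hN2
  intro Y hY1 hY2
  constructor
  · field_simp
    ring
  · have h1 : ((N : ℝ) + σ) > 0 := by linarith
    have h2 : (((N : ℝ) + 2 * σ + 2) / ((N : ℝ) - 2) - p) < 0 := by linarith
    have hc : (((N : ℝ) + σ) * (((N : ℝ) + 2 * σ + 2) / ((N : ℝ) - 2) - p) / ((N : ℝ) - 2)) < 0 := by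
      apply div_neg_of_neg_of_pos _ hN2
      exact mul_neg_of_pos_of_neg h1 h2
    have hY2sq : (0 : ℝ) ≤ Y ^ 2 := sq_nonneg Y
    have hsum : (0 : ℝ) ≤ Y + ((N : ℝ) - 2) := by linarith
    have := mul_nonneg hY2sq hsum
    nlinarith [mul_nonneg hY2sq hsum, hc.le]
end
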